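/- arXiv:1902.10217 — 2 statements merged into one kernel-verified Lean document; each statement's English description precedes it below -/
import Mathlib

section
/- The Fourier transform of Ψ₂(t) = C·e^{-a|t|}(cos(at) + sin(a|t|)) (C > 0, a > 0) is Ψ̂₂(ω) = C·√(2/π)·4a³/(4a⁴ + ω⁴), which is strictly positive for all real ω. -/
/-!
Since `cos (a t)` is even, `Ψ₂(t) = (C/2)((1 - i) e^{z|t|} + (1 + i) e^{z̄|t|})` with
`z = a(-1 + i)`. Splitting at `0`, the transform of `e^{c|t|}` (`Re c < 0`) is
`-1/(c - iω) - 1/(c + iω) = -2c/(c² + ω²)`. As `z² = -2ia²`, the two terms have denominators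
`ω² ∓ 2ia²`, whose product is `ω⁴ + 4a⁴`.
-/

open MeasureTheory Real Filter

section
open Complex Set

theorem integrable_and_integral_fourier_cexp_mul_abs {c : ℂ} (hc : c.re < 0) (ω : ℝ) :
    Integrable (fun t : ℝ => cexp (-(I * ω * t)) * cexp (c * |t|)) ∧
      ∫ t : ℝ, cexp (-(I * ω * t)) * cexp (c * |t|) = -2 * c / (c ^ 2 + ω ^ 2) := by
  set f := fun t : ℝ => cexp (-(I * ω * t)) * cexp (c * |t|)
  have hIoi : EqOn f (fun t : ℝ => cexp ((c - I * ω) * t)) (Ioi 0) := fun t ht => by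
    simp only [f, abs_of_pos (mem_Ioi.mp ht), ← Complex.exp_add]
    ring_nf
  have hIic : EqOn f (fun t : ℝ => cexp (-(c + I * ω) * t)) (Iic 0) := fun t ht => by
    simp only [f, abs_of_nonpos (mem_Iic.mp ht), ← Complex.exp_add]
    push_cast
    ring_nf
  have hre₁ : (c - I * ω).re < 0 := by simpa using hc
  have hre₂ : 0 < (-(c + I * ω)).re := by simpa using hc
  have hint₁ : IntegrableOn f (Ioi 0) :=
    (integrableOn_exp_mul_complex_Ioi hre₁ 0).congr_fun hIoi.symm measurableSet_Ioi
  have hint₂ : IntegrableOn f (Iic 0) :=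
    (integrableOn_exp_mul_complex_Iic hre₂ 0).congr_fun hIic.symm measurableSet_Iic
  have hne₁ : c - I * ω ≠ 0 := fun h => by simp [h] at hre₁
  have hne₂ : c + I * ω ≠ 0 := fun h => by simp [h] at hre₂
  refine ⟨by simpa using hint₂.union hint₁, ?_⟩
  rw [← intervalIntegral.integral_Iic_add_Ioi hint₂ hint₁,
    setIntegral_congr_fun measurableSet_Iic hIic, setIntegral_congr_fun measurableSet_Ioi hIoi,
    integral_exp_mul_complex_Iic hre₂, integral_exp_mul_complex_Ioi hre₁]
  have hfactor : c ^ 2 + ω ^ 2 = (c - I * ω) * (c + I * ω) := by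
    linear_combination (ω : ℂ) ^ 2 * I_sq
  simp only [ofReal_zero, mul_zero, Complex.exp_zero, hfactor]
  field_simp
  ring

theorem ofReal_exp_mul_cos_add_sin (a s : ℝ) :
    ((Real.exp (-a * s) * (Real.cos (a * s) + Real.sin (a * s)) : ℝ) : ℂ) =
      ((1 - I) * cexp ((-a + a * I) * s) + (1 + I) * cexp ((-a - a * I) * s)) / 2 := by
  have hexp : ∀ θ : ℂ,
      cexp ((-a + θ * I) * s) = cexp (-a * s) * (cos (θ * s) + sin (θ * s) * I) :=
    fun θ => by rw [← exp_mul_I, ← Complex.exp_add]; ring_nf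
  have hconj : (-a - a * I : ℂ) = -a + -a * I := by ring
  rw [hexp, hconj, hexp, neg_mul (a : ℂ), Complex.cos_neg, Complex.sin_neg]
  push_cast
  simp only [neg_mul]
  linear_combination cexp (-(a * s)) * Complex.sin (a * s) * I_sq

theorem cos_mul_abs (a t : ℝ) : Real.cos (a * |t|) = Real.cos (a * t) := by
  rcases abs_choice t with h | h <;> simp [h]

theorem ofReal_underdamped_eq_cexp (C a t : ℝ) :
    ((C * Real.exp (-a * |t|) * (Real.cos (a * t) + Real.sin (a * |t|)) : ℝ) : ℂ) =
      C / 2 * ((1 - I) * cexp ((-a + a * I) * |t|) + (1 + I) * cexp ((-a - a * I) * |t|)) := by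
  rw [← cos_mul_abs, mul_assoc, ofReal_mul, ofReal_exp_mul_cos_add_sin]
  ring

theorem underdamped_fourier_combination_eq (C a ω : ℝ) (ha : a ≠ 0) :
    (C / 2 : ℂ) * ((1 - I) * (-2 * (-a + a * I) / ((-a + a * I) ^ 2 + ω ^ 2)) +
      (1 + I) * (-2 * (-a - a * I) / ((-a - a * I) ^ 2 + ω ^ 2))) =
      ((8 * C * a ^ 3 / (4 * a ^ 4 + ω ^ 4) : ℝ) : ℂ) := by
  have hz : (-a + a * I : ℂ) ^ 2 + ω ^ 2 = ω ^ 2 - 2 * a ^ 2 * I := by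
    linear_combination (a : ℂ) ^ 2 * I_sq
  have hw : (-a - a * I : ℂ) ^ 2 + ω ^ 2 = ω ^ 2 + 2 * a ^ 2 * I := by
    linear_combination (a : ℂ) ^ 2 * I_sq
  have hD : (ω ^ 2 - 2 * a ^ 2 * I) * (ω ^ 2 + 2 * a ^ 2 * I) =
      ((4 * a ^ 4 + ω ^ 4 : ℝ) : ℂ) := by
    push_cast
    linear_combination (-4 * (a : ℂ) ^ 4) * I_sq
  have hp : (ω ^ 2 - 2 * a ^ 2 * I : ℂ) ≠ 0 := fun h => by
    simpa [ha, ← ofReal_pow] using congrArg im h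
  have hq : (ω ^ 2 + 2 * a ^ 2 * I : ℂ) ≠ 0 := fun h => by
    simpa [ha, ← ofReal_pow] using congrArg im h
  rw [hz, hw, ← mul_div_assoc, ← mul_div_assoc, div_add_div _ _ hp hq, hD, ← mul_div_assoc,
    ofReal_div]
  congr 1
  push_cast
  linear_combination (2 * C * a * ω ^ 2 - 8 * C * a ^ 3 : ℂ) * I_sq

end

theorem two_div_sqrt_two_mul_pi : 2 / √(2 * π) = √(2 / π) := by
  rw [show (2 / π) = 2 ^ 2 / (2 * π) by field_simp, Real.sqrt_div' _ (by positivity),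
    Real.sqrt_sq zero_le_two]

/-- The Fourier transform of `Ψ₂(t) = C e^{-a|t|}(cos(at) + sin(a|t|))`
(with `C, a > 0`) is `Ψ̂₂(ω) = C √(2/π) 4a³/(4a⁴ + ω⁴)`, strictly positive. -/
theorem fourier_transform_underdamped_relaxation
    (C a : ℝ) (hC : 0 < C) (ha : 0 < a) :
    ∀ ω : ℝ,
      (1 / Real.sqrt (2 * Real.pi)) *
          (∫ t : ℝ, Complex.exp (-(Complex.I * ω * t)) *
            ((C * Real.exp (-a * |t|) *
              (Real.cos (a * t) + Real.sin (a * |t|)) : ℝ) : ℂ)) =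
        ((C * Real.sqrt (2 / Real.pi) * (4 * a ^ 3) / (4 * a ^ 4 + ω ^ 4) : ℝ) : ℂ) ∧
      0 < C * Real.sqrt (2 / Real.pi) * (4 * a ^ 3) / (4 * a ^ 4 + ω ^ 4) := by
  intro ω
  refine ⟨?_, by positivity⟩
  obtain ⟨hint₁, hval₁⟩ :=
    integrable_and_integral_fourier_cexp_mul_abs (c := -a + a * Complex.I) (by simpa using ha) ω
  obtain ⟨hint₂, hval₂⟩ :=
    integrable_and_integral_fourier_cexp_mul_abs (c := -a - a * Complex.I) (by simpa using ha) ω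
  simp_rw [ofReal_underdamped_eq_cexp, mul_left_comm (Complex.exp _) (C / 2 : ℂ), mul_add,
    mul_left_comm (Complex.exp _)]
  rw [integral_add ((hint₁.const_mul _).const_mul _) ((hint₂.const_mul _).const_mul _)]
  simp only [integral_const_mul]
  rw [hval₁, hval₂, ← mul_add, underdamped_fourier_combination_eq C a ω ha.ne',
    ← two_div_sqrt_two_mul_pi]
  push_cast
  ring
end

section
/- For the underdamped relaxation function Ψ(t) = (e^{-γ|t|}/(2βm²ω₀⁴ω²))[(2ω₀²−ω²)cos(ωt) − γω sin(ω|t|) − 2ω₀²] with ω² = 4ω₀² − γ², 0 < γ < 2ω₀, the relaxation time τ_R = ∫₀^∞ Ψ(t)/Ψ(0) dt equals 1/(2γ) + γ/(2ω₀²). -/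
open MeasureTheory Real Set

/-- For the underdamped relaxation function
`Ψ(t) = e^{-γ|t|}/(2βm²ω₀⁴ω²)·[(2ω₀²−ω²)cos(ωt) − γω sin(ω|t|) − 2ω₀²]`
with `ω = √(4ω₀² − γ²)` and `0 < γ < 2ω₀`, the relaxation time
`τ_R = ∫₀^∞ Ψ(t) dt / Ψ(0)` equals `1/(2γ) + γ/(2ω₀²)`. -/
theorem relaxation_time_underdamped
    (β m ω₀ γ : ℝ) (hβ : 0 < β) (hm : 0 < m) (hω₀ : 0 < ω₀) (hγ : 0 < γ)
    (hund : γ < 2 * ω₀) :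
    let ω : ℝ := Real.sqrt (4 * ω₀ ^ 2 - γ ^ 2)
    let Ψ : ℝ → ℝ := fun t =>
      Real.exp (-γ * |t|) / (2 * β * m ^ 2 * ω₀ ^ 4 * ω ^ 2) *
        ((2 * ω₀ ^ 2 - ω ^ 2) * Real.cos (ω * t) -
          γ * ω * Real.sin (ω * |t|) - 2 * ω₀ ^ 2)
    (∫ t in Ioi (0:ℝ), Ψ t) / Ψ 0 = 1 / (2 * γ) + γ / (2 * ω₀ ^ 2) := by
  intro ω Ψ
  have h4 : 0 < 4 * ω₀ ^ 2 - γ ^ 2 := by nlinarith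
  have hω2 : ω ^ 2 = 4 * ω₀ ^ 2 - γ ^ 2 := Real.sq_sqrt h4.le
  have hωpos : 0 < ω := Real.sqrt_pos.mpr h4
  set D : ℝ := 2 * β * m ^ 2 * ω₀ ^ 4 * ω ^ 2 with hD
  have hDpos : 0 < D := by positivity
  set A : ℝ := γ * (3 * ω₀ ^ 2 - γ ^ 2) / (2 * ω₀ ^ 2) with hA
  set B : ℝ := ω * (γ ^ 2 - ω₀ ^ 2) / (2 * ω₀ ^ 2) with hB
  set Cc : ℝ := 2 * ω₀ ^ 2 / γ with hCc
  set f : ℝ → ℝ := fun t => Real.exp (-γ * t) / D *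
      ((2 * ω₀ ^ 2 - ω ^ 2) * Real.cos (ω * t) - γ * ω * Real.sin (ω * t) - 2 * ω₀ ^ 2)
    with hf
  set F : ℝ → ℝ := fun t => Real.exp (-γ * t) *
      (A * Real.cos (ω * t) + B * Real.sin (ω * t) + Cc) / D with hF
  -- the integrand agrees with `f` on `Ioi 0`
  have hint : ∫ t in Ioi (0:ℝ), Ψ t = ∫ t in Ioi (0:ℝ), f t := by
    refine setIntegral_congr_fun measurableSet_Ioi (fun t ht => ?_)
    simp only [Ψ, hf, hD, abs_of_pos (mem_Ioi.mp ht)]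
  -- derivative of the antiderivative
  have hderiv : ∀ t : ℝ, HasDerivAt F (f t) t := by
    intro t
    have he : HasDerivAt (fun t : ℝ => Real.exp (-γ * t))
        (Real.exp (-γ * t) * (-γ * 1)) t := ((hasDerivAt_id t).const_mul (-γ)).exp
    have hcos : HasDerivAt (fun t : ℝ => Real.cos (ω * t))
        (-Real.sin (ω * t) * (ω * 1)) t := ((hasDerivAt_id t).const_mul ω).cos
    have hsin : HasDerivAt (fun t : ℝ => Real.sin (ω * t))
        (Real.cos (ω * t) * (ω * 1)) t := ((hasDerivAt_id t).const_mul ω).sin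
    have hin : HasDerivAt (fun t : ℝ =>
        A * Real.cos (ω * t) + B * Real.sin (ω * t) + Cc)
        (A * (-Real.sin (ω * t) * (ω * 1)) + B * (Real.cos (ω * t) * (ω * 1))) t :=
      ((hcos.const_mul A).add (hsin.const_mul B)).add_const Cc
    have h := (he.mul hin).div_const D
    refine h.congr_deriv (Eq.symm ?_)
    simp only [hf, hA, hB, hCc]
    have hγ' : γ ≠ 0 := hγ.ne'
    have hω₀' : ω₀ ≠ 0 := hω₀.ne'
    have hD' : D ≠ 0 := hDpos.ne'
    field_simp
    linear_combination (-(γ^2+ω₀^2) * Real.cos (t*ω)) * hω2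
  -- integrability of `f`
  have hγ' : γ ≠ 0 := hγ.ne'
  have hω₀' : ω₀ ≠ 0 := hω₀.ne'
  have hD' : D ≠ 0 := hDpos.ne'
  have habs : ∀ x : ℝ, |(2 * ω₀ ^ 2 - ω ^ 2) * Real.cos x - γ * ω * Real.sin x - 2 * ω₀ ^ 2|
      ≤ |2 * ω₀ ^ 2 - ω ^ 2| + γ * ω + 2 * ω₀ ^ 2 := by
    intro x
    have hc := Real.abs_cos_le_one x
    have hs := Real.abs_sin_le_one x
    have h1 : |(2 * ω₀ ^ 2 - ω ^ 2) * Real.cos x| ≤ |2 * ω₀ ^ 2 - ω ^ 2| := by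
      rw [abs_mul]; exact mul_le_of_le_one_right (abs_nonneg _) hc
    have h2 : |γ * ω * Real.sin x| ≤ γ * ω := by
      rw [abs_mul, abs_of_pos (by positivity : (0:ℝ) < γ * ω)]
      exact mul_le_of_le_one_right (by positivity) hs
    calc |(2 * ω₀ ^ 2 - ω ^ 2) * Real.cos x - γ * ω * Real.sin x - 2 * ω₀ ^ 2|
        ≤ |(2 * ω₀ ^ 2 - ω ^ 2) * Real.cos x - γ * ω * Real.sin x| + |2 * ω₀ ^ 2| :=
          abs_sub _ _
      _ ≤ (|(2 * ω₀ ^ 2 - ω ^ 2) * Real.cos x| + |γ * ω * Real.sin x|) + |2 * ω₀ ^ 2| :=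
          add_le_add_left (abs_sub _ _) _
      _ ≤ |2 * ω₀ ^ 2 - ω ^ 2| + γ * ω + 2 * ω₀ ^ 2 := by
          rw [abs_of_pos (by positivity : (0:ℝ) < 2 * ω₀ ^ 2)]; linarith
  have hfcont : Continuous f := by
    simp only [hf]; fun_prop
  have hfint : IntegrableOn f (Ioi (0:ℝ)) := by
    have hg : IntegrableOn
        (fun t : ℝ => (|2 * ω₀ ^ 2 - ω ^ 2| + γ * ω + 2 * ω₀ ^ 2) / D * Real.exp (-γ * t))
        (Ioi (0:ℝ)) := (exp_neg_integrableOn_Ioi 0 hγ).const_mul _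
    refine hg.mono' hfcont.aestronglyMeasurable ?_
    refine Filter.Eventually.of_forall (fun t => ?_)
    have hE : 0 < Real.exp (-γ * t) := Real.exp_pos _
    simp only [hf, Real.norm_eq_abs, abs_mul, abs_div, abs_of_pos hE, abs_of_pos hDpos]
    calc Real.exp (-γ * t) / D *
          |(2 * ω₀ ^ 2 - ω ^ 2) * Real.cos (ω * t) - γ * ω * Real.sin (ω * t) - 2 * ω₀ ^ 2|
        ≤ Real.exp (-γ * t) / D * (|2 * ω₀ ^ 2 - ω ^ 2| + γ * ω + 2 * ω₀ ^ 2) :=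
          mul_le_mul_of_nonneg_left (habs _) (by positivity)
      _ = (|2 * ω₀ ^ 2 - ω ^ 2| + γ * ω + 2 * ω₀ ^ 2) / D * Real.exp (-γ * t) := by ring
  -- limit of `F` at infinity
  have hexp : Filter.Tendsto (fun t : ℝ => Real.exp (-γ * t)) Filter.atTop (nhds 0) := by
    have h0 : Filter.Tendsto (fun t : ℝ => γ * t) Filter.atTop Filter.atTop :=
      Filter.Tendsto.const_mul_atTop hγ Filter.tendsto_id
    have h1 : Filter.Tendsto (fun t : ℝ => -(γ * t)) Filter.atTop Filter.atBot :=
      Filter.tendsto_neg_atBot_iff.mpr h0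
    have h2 : Filter.Tendsto (fun t : ℝ => -γ * t) Filter.atTop Filter.atBot :=
      Filter.Tendsto.congr (fun t => by ring) h1
    exact Real.tendsto_exp_atBot.comp h2
  have htends : Filter.Tendsto F Filter.atTop (nhds 0) := by
    have hg : Filter.Tendsto (fun t : ℝ => (|A| + |B| + |Cc|) / D * Real.exp (-γ * t))
        Filter.atTop (nhds 0) := by
      simpa using hexp.const_mul ((|A| + |B| + |Cc|) / D)
    refine squeeze_zero_norm (fun t => ?_) hg
    have hE : 0 < Real.exp (-γ * t) := Real.exp_pos _
    have hb : |A * Real.cos (ω * t) + B * Real.sin (ω * t) + Cc| ≤ |A| + |B| + |Cc| := by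
      have hc := Real.abs_cos_le_one (ω * t)
      have hs := Real.abs_sin_le_one (ω * t)
      calc |A * Real.cos (ω * t) + B * Real.sin (ω * t) + Cc|
          ≤ |A * Real.cos (ω * t) + B * Real.sin (ω * t)| + |Cc| := abs_add_le _ _
        _ ≤ (|A * Real.cos (ω * t)| + |B * Real.sin (ω * t)|) + |Cc| :=
            add_le_add_left (abs_add_le _ _) _
        _ ≤ |A| + |B| + |Cc| := by
            rw [abs_mul, abs_mul]
            have := mul_le_of_le_one_right (abs_nonneg A) hc
            have := mul_le_of_le_one_right (abs_nonneg B) hs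
            linarith
    simp only [hF, Real.norm_eq_abs, abs_div, abs_mul, abs_of_pos hE, abs_of_pos hDpos]
    calc Real.exp (-γ * t) * |A * Real.cos (ω * t) + B * Real.sin (ω * t) + Cc| / D
        ≤ Real.exp (-γ * t) * (|A| + |B| + |Cc|) / D := by gcongr
      _ = (|A| + |B| + |Cc|) / D * Real.exp (-γ * t) := by ring
  have hFcont : Continuous F := by
    simp only [hF]; fun_prop
  have hFTC := integral_Ioi_of_hasDerivAt_of_tendsto
    (hFcont.continuousWithinAt) (fun x _ => hderiv x) hfint htends
  have hF0 : F 0 = (A + Cc) / D := by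
    simp [hF]
  have hΨ0 : Ψ 0 = -(ω ^ 2) / D := by
    simp only [Ψ, abs_zero, mul_zero, Real.cos_zero, Real.sin_zero, Real.exp_zero, hD]
    ring
  have h4' : 4 * ω₀ ^ 2 - γ ^ 2 ≠ 0 := h4.ne'
  have hω' : ω ≠ 0 := hωpos.ne'
  rw [hint, hFTC, hF0, hΨ0, zero_sub]
  have hstep : -((A + Cc) / D) / (-ω ^ 2 / D) = (A + Cc) / ω ^ 2 := by
    field_simp
  rw [hstep, hω2, hA, hCc]
  field_simp
  rw [div_eq_iff (by intro h; apply h4'; linarith)]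
  ring
end
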